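/- For all natural numbers m and s with 0 ≤ s ≤ m, one has (2s−1)!!·(2m−2s−1)!!·binom(m,s) ≤ (2m−1)!!. -/

import Mathlib

/-!
Since `(2k-1)!! * 2^k * k! = (2k)!`, clearing factorials turns the inequality into
`binom(m,s)^2 ≤ binom(2m,2s)`, and the left side is the middle term `binom(m,s) * binom(m,s)`
of the Vandermonde sum `binom(2m,2s) = ∑ binom(m,i) * binom(m,2s-i)`.
-/

/-- `oddDoubleFact k = (2k-1)!! = (2k-1)(2k-3)⋯3⋅1`, with `oddDoubleFact 0 = (-1)!! = 1`. -/
def oddDoubleFact : ℕ → ℕ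
  | 0 => 1
  | (k + 1) => (2 * k + 1) * oddDoubleFact k

open scoped Nat

theorem Nat.choose_mul_choose_le_add_choose_add (m n i j : ℕ) :
    m.choose i * n.choose j ≤ (m + n).choose (i + j) := by
  rw [Nat.add_choose_eq]
  exact Finset.single_le_sum (f := fun p : ℕ × ℕ => m.choose p.1 * n.choose p.2)
    (fun _ _ => Nat.zero_le _) (a := (i, j)) (Finset.HasAntidiagonal.mem_antidiagonal.mpr rfl)

theorem oddDoubleFact_mul_two_pow_mul_factorial (k : ℕ) :
    oddDoubleFact k * 2 ^ k * k ! = (2 * k)! := by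
  induction k with
  | zero => rfl
  | succ k ih =>
    rw [show 2 * (k + 1) = 2 * k + 1 + 1 by ring, Nat.factorial_succ (2 * k + 1),
      Nat.factorial_succ (2 * k), ← ih, oddDoubleFact, Nat.factorial_succ k]
    ring

theorem oddDoubleFact_mul_oddDoubleFact_mul_add_choose_le (a b : ℕ) :
    oddDoubleFact a * oddDoubleFact b * (a + b).choose a ≤ oddDoubleFact (a + b) := by
  have hchoose : (a + b).choose a * a ! * b ! = (a + b)! := by
    simpa using Nat.choose_mul_factorial_mul_factorial (Nat.le_add_right a b)
  have hchoose_two_mul : (2 * (a + b)).choose (2 * a) * (2 * a)! * (2 * b)! = (2 * (a + b))! := by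
    simpa [mul_add] using Nat.choose_mul_factorial_mul_factorial (by omega : 2 * a ≤ 2 * (a + b))
  have hsq : (a + b).choose a * (a + b).choose a ≤ (2 * (a + b)).choose (2 * a) := by
    simpa [two_mul] using Nat.choose_mul_choose_le_add_choose_add (a + b) (a + b) a a
  have hpos : 0 < 2 ^ (a + b) * (a + b)! * (a ! * b !) := by positivity
  refine Nat.le_of_mul_le_mul_right ?_ hpos
  calc oddDoubleFact a * oddDoubleFact b * (a + b).choose a
        * (2 ^ (a + b) * (a + b)! * (a ! * b !))
      = (oddDoubleFact a * 2 ^ a * a !) * (oddDoubleFact b * 2 ^ b * b !) * (a ! * b !)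
          * ((a + b).choose a * (a + b).choose a) := by
        rw [← hchoose]; ring
    _ ≤ (2 * a)! * (2 * b)! * (a ! * b !) * (2 * (a + b)).choose (2 * a) := by
        rw [oddDoubleFact_mul_two_pow_mul_factorial, oddDoubleFact_mul_two_pow_mul_factorial]
        exact Nat.mul_le_mul_left _ hsq
    _ = (2 * (a + b))! * (a ! * b !) := by rw [← hchoose_two_mul]; ring
    _ = oddDoubleFact (a + b) * (2 ^ (a + b) * (a + b)! * (a ! * b !)) := by
        rw [← oddDoubleFact_mul_two_pow_mul_factorial]; ring

theorem doubleFact_mul_choose_le_general (m s : ℕ) :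
    oddDoubleFact s * oddDoubleFact (m - s) * m.choose s ≤ oddDoubleFact m := by
  rcases le_or_gt s m with hsm | hms
  · obtain ⟨n, rfl⟩ := Nat.exists_eq_add_of_le hsm
    simpa using oddDoubleFact_mul_oddDoubleFact_mul_add_choose_le s n
  · simp [Nat.choose_eq_zero_of_lt hms]

theorem doubleFact_mul_choose_le (m s : ℕ) (h : s ≤ m) :
    oddDoubleFact s * oddDoubleFact (m - s) * m.choose s ≤ oddDoubleFact m :=
  doubleFact_mul_choose_le_general m s
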